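/- CES fails Strong Monotonicity even for independent distributions: Let D be the uniform distribution on the six points {1,2,3} × {1,2} in ℝ² (a product distribution), and define f₁(u, v) = √u + v and f₂(u, v) = u + v on the domain u ≥ 1, v ≥ 1. For all points of the domain, ∂f₂/∂u = 1 ≥ ∂f₁/∂u = 1/(2√u) ≥ 0. Yet for the explicand (2,2), ces_1((2,2), D, f₂) = 0 while ces_1((2,2), D, f₁) = (2√2 − 1 − √3)/3 > 0; i.e., strengthening the function's dependence on feature 1 strictly decreased the magnitude of its CES attribution. -/

import Mathlib

open scoped Classical

noncomputable def shapley {N : Type*} [Fintype N] [DecidableEq N]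
    (v : Finset N → ℝ) (i : N) : ℝ :=
  ∑ S ∈ (Finset.univ.erase i).powerset,
    ((S.card.factorial : ℝ) * ((Fintype.card N - S.card - 1).factorial) /
      (Fintype.card N).factorial) * (v (insert i S) - v S)


noncomputable def condExp {N : Type*} [Fintype N] [DecidableEq N]
    (T : Finset (N → ℝ)) (p : (N → ℝ) → ℝ) (f : (N → ℝ) → ℝ)
    (x : N → ℝ) (S : Finset N) : ℝ :=
  (∑ t ∈ T.filter fun t => ∀ j ∈ S, t j = x j, p t * f t) /
  (∑ t ∈ T.filter fun t => ∀ j ∈ S, t j = x j, p t)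

noncomputable def ces {N : Type*} [Fintype N] [DecidableEq N]
    (T : Finset (N → ℝ)) (p : (N → ℝ) → ℝ) (x : N → ℝ)
    (f : (N → ℝ) → ℝ) (i : N) : ℝ :=
  shapley (fun S => condExp T p f x S) i

/-!
On the grid `{1,2,3} × {1,2}` with uniform weights both marginal contributions of feature `0`
at `(2,2)` compare the value of `f` at `u = 2` with its average over `u ∈ {1,2,3}`. For
`f₂ = u + v` that average is attained at `u = 2`, so the attribution vanishes; for
`f₁ = √u + v` strict concavity of `√` puts the average `(1 + √2 + √3)/3` below `√2`, so the
attribution is positive although `f₁` depends on `u` more weakly than `f₂`.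
-/

lemma shapley_fin_two_zero (v : Finset (Fin 2) → ℝ) :
    shapley v 0 = ((v {0} - v ∅) + (v {0, 1} - v {1})) / 2 := by
  have : (Finset.univ.erase (0 : Fin 2)).powerset = {∅, {1}} := by decide
  rw [shapley, this, Finset.sum_pair (by decide)]
  norm_num
  ring

lemma condExp_const_weight {N : Type*} [Fintype N] [DecidableEq N]
    (T : Finset (N → ℝ)) {c : ℝ} (hc : c ≠ 0) (f : (N → ℝ) → ℝ) (x : N → ℝ) (S : Finset N) :
    condExp T (fun _ => c) f x S =
      (∑ t ∈ T.filter fun t => ∀ j ∈ S, t j = x j, f t) /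
        (T.filter fun t => ∀ j ∈ S, t j = x j).card := by
  rw [condExp, ← Finset.mul_sum, Finset.sum_const, nsmul_eq_mul, mul_comm _ c,
    mul_div_mul_left _ _ hc]

lemma ces_grid (f : (Fin 2 → ℝ) → ℝ) :
    ces ({![1,1], ![2,1], ![3,1], ![1,2], ![2,2], ![3,2]} : Finset (Fin 2 → ℝ))
        (fun _ => (1 : ℝ) / 6) ![2,2] f 0 =
      (((f ![2,1] + f ![2,2]) / 2
          - (f ![1,1] + f ![2,1] + f ![3,1] + f ![1,2] + f ![2,2] + f ![3,2]) / 6)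
        + (f ![2,2] - (f ![1,2] + f ![2,2] + f ![3,2]) / 3)) / 2 := by
  rw [ces, shapley_fin_two_zero]
  simp only [condExp_const_weight _ (by norm_num : (1 : ℝ) / 6 ≠ 0)]
  norm_num [Finset.filter_insert, Finset.filter_singleton, funext_iff, Fin.forall_fin_two]
  ring

lemma one_div_two_mul_sqrt_le_one {u : ℝ} (hu : 1 / 4 ≤ u) : 1 / (2 * √u) ≤ 1 := by
  have : 1 / 2 ≤ √u := Real.le_sqrt_of_sq_le (by linarith)
  rw [div_le_one (by linarith)]
  linarith

lemma one_add_sqrt_three_lt_two_mul_sqrt_two : 1 + √3 < 2 * √2 := by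
  have h3 : √3 < 2 := (Real.sqrt_lt' two_pos).2 (by norm_num)
  have h2 : (2 * √2) ^ 2 = 8 := by rw [mul_pow, Real.sq_sqrt zero_le_two]; norm_num
  have h3' : √3 ^ 2 = 3 := Real.sq_sqrt zero_le_three
  nlinarith [Real.sqrt_nonneg 2, Real.sqrt_nonneg 3]

/-- **CES fails Strong Monotonicity even for independent distributions**
(Table 4 of the paper): under the uniform distribution on
`{1,2,3} × {1,2}` (a product distribution), with `f₁ (u,v) = √u + v` and
`f₂ (u,v) = u + v`, the partial derivative of `f₂` in the first feature
dominates that of `f₁` everywhere on the domain `u ≥ 1`, yet at explicand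
`(2,2)` the first feature's CES attribution drops from
`(2√2 - 1 - √3)/3 > 0` for `f₁` to `0` for `f₂`. -/
theorem ces_fails_strong_monotonicity :
    (∀ u : ℝ, 1 ≤ u →
      0 ≤ 1 / (2 * Real.sqrt u) ∧ 1 / (2 * Real.sqrt u) ≤ 1) ∧
    ces ({![1,1], ![2,1], ![3,1], ![1,2], ![2,2], ![3,2]} : Finset (Fin 2 → ℝ))
        (fun _ => (1 : ℝ) / 6)
        ![2,2] (fun t => t 0 + t 1) 0 = 0 ∧
    ces ({![1,1], ![2,1], ![3,1], ![1,2], ![2,2], ![3,2]} : Finset (Fin 2 → ℝ))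
        (fun _ => (1 : ℝ) / 6)
        ![2,2] (fun t => Real.sqrt (t 0) + t 1) 0 =
      (2 * Real.sqrt 2 - 1 - Real.sqrt 3) / 3 ∧
    0 < (2 * Real.sqrt 2 - 1 - Real.sqrt 3) / 3 := by
  refine ⟨fun u hu => ⟨by positivity, one_div_two_mul_sqrt_le_one (by linarith)⟩, ?_, ?_, ?_⟩
  · rw [ces_grid]
    norm_num
  · rw [ces_grid]
    norm_num
    ring
  · linarith [one_add_sqrt_three_lt_two_mul_sqrt_two]
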